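/- arXiv:1708.07681 — 7 statements merged into one kernel-verified Lean document; each statement's English description precedes it below -/
import Mathlib

section
/- Let (λ_z)_{z∈ℤ} be a square-summable real sequence with Σ_z λ_z² = 1, and define κ_r = 2^{r/2−1}(r−1)! Σ_z λ_z^r for r ≥ 2. Then for every r ≥ 2, κ_{2r}/((2r−1)!) − 1 ≥ (r−1)(κ_4/3! − 1). -/
/-!
The sequence `b j = κ_{2j+2}/(2j+1)! = 2^j Σ_z λ_z^{2j+2}` (`scaledEvenMoment`) has
`b 0 = 1`, and the claim reads `b (r-1) - b 0 ≥ (r-1) (b 1 - b 0)`. This holds because `b` is a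
convex sequence: termwise,
`b (j+2) - 2 b (j+1) + b j = Σ_z 2^j λ_z^{2j+2} (2λ_z² - 1)² ≥ 0`.
-/

open Nat

theorem le_of_second_diff_nonneg {α : Type*} [Field α] [LinearOrder α] [IsStrictOrderedRing α]
    (b : ℕ → α) (hb : ∀ j, 0 ≤ b (j + 2) - 2 * b (j + 1) + b j) (m : ℕ) :
    b 0 + m * (b 1 - b 0) ≤ b m := by
  have hstep : ∀ j, b 1 - b 0 ≤ b (j + 1) - b j := by
    intro j
    induction j with
    | zero => exact le_rfl
    | succ n ih => linarith [hb n]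
  induction m with
  | zero => simp
  | succ n ih => push_cast; linarith [hstep n]

theorem Summable.pow_of_summable_sq {ι : Type*} {l : ι → ℝ} (hl : Summable fun z => l z ^ 2)
    {n : ℕ} (hn : 2 ≤ n) : Summable fun z => l z ^ n := by
  have h_small : ∀ᶠ z in Filter.cofinite, |l z| ≤ 1 := by
    filter_upwards [hl.tendsto_cofinite_zero.eventually (eventually_le_nhds zero_lt_one)] with z hz
    exact (sq_le_one_iff_abs_le_one _).mp hz
  refine Summable.of_norm_bounded_eventually hl ?_
  filter_upwards [h_small] with z hz
  rw [Real.norm_eq_abs, abs_pow, ← sq_abs (l z)]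
  exact pow_le_pow_of_le_one (abs_nonneg _) hz hn

noncomputable def scaledEvenMoment {ι : Type*} (l : ι → ℝ) (j : ℕ) : ℝ :=
  2 ^ j * ∑' z, l z ^ (2 * j + 2)

theorem scaledEvenMoment_second_diff_nonneg {ι : Type*} {l : ι → ℝ}
    (hl : Summable fun z => l z ^ 2) (j : ℕ) :
    0 ≤ scaledEvenMoment l (j + 2) - 2 * scaledEvenMoment l (j + 1) + scaledEvenMoment l j := by
  have hs : ∀ i, HasSum (fun z => l z ^ (2 * i + 2)) (∑' z, l z ^ (2 * i + 2)) := fun i =>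
    (hl.pow_of_summable_sq (by omega)).hasSum
  have h := (((hs (j + 2)).mul_left (2 ^ (j + 2))).sub
    (((hs (j + 1)).mul_left (2 ^ (j + 1))).mul_left 2)).add ((hs j).mul_left (2 ^ j))
  unfold scaledEvenMoment
  refine h.nonneg fun z => ?_
  have hterm : 2 ^ (j + 2) * l z ^ (2 * (j + 2) + 2) - 2 * (2 ^ (j + 1) * l z ^ (2 * (j + 1) + 2))
      + 2 ^ j * l z ^ (2 * j + 2) = 2 ^ j * (l z ^ 2) ^ (j + 1) * (2 * l z ^ 2 - 1) ^ 2 := by ring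
  simp only [hterm]
  positivity

theorem div_factorial_eq_scaledEvenMoment {ι : Type*} {l : ι → ℝ} {κ : ℕ → ℝ}
    (hκ : ∀ r, 2 ≤ r →
      κ r = (2:ℝ)^((r:ℝ)/2 - 1) * ((r-1).factorial : ℝ) * ∑' z, (l z)^r) (j : ℕ) :
    κ (2 * j + 2) / ((2 * j + 1)! : ℝ) = scaledEvenMoment l j := by
  have hexp : ((2 * j + 2 : ℕ) : ℝ) / 2 - 1 = (j : ℕ) := by push_cast; ring
  rw [hκ _ (by omega), hexp, Real.rpow_natCast, show 2 * j + 2 - 1 = 2 * j + 1 by omega,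
    scaledEvenMoment]
  field_simp

/-- For a normalized spectral sequence of the second Wiener chaos, the cumulants
κ_r = 2^{r/2−1}(r−1)! Σ λ_z^r satisfy
κ_{2r}/(2r−1)! − 1 ≥ (r−1)(κ_4/3! − 1) for every r ≥ 2. -/
theorem stmt_1 (l : ℤ → ℝ) (hsum : Summable fun z => (l z)^2)
    (h1 : ∑' z, (l z)^2 = 1)
    (κ : ℕ → ℝ)
    (hκ : ∀ r, 2 ≤ r →
      κ r = (2:ℝ)^((r:ℝ)/2 - 1) * ((r-1).factorial : ℝ) * ∑' z, (l z)^r) :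
    ∀ r : ℕ, 2 ≤ r →
      κ (2*r) / ((2*r-1).factorial : ℝ) - 1 ≥
        ((r:ℝ) - 1) * (κ 4 / ((Nat.factorial 3 : ℕ) : ℝ) - 1) := by
  intro r hr
  obtain ⟨j, rfl⟩ : ∃ j, r = j + 1 := ⟨r - 1, by omega⟩
  have h0 : scaledEvenMoment l 0 = 1 := by simpa [scaledEvenMoment] using h1
  have h4 : κ 4 / ((Nat.factorial 3 : ℕ) : ℝ) = scaledEvenMoment l 1 :=
    div_factorial_eq_scaledEvenMoment hκ 1
  rw [show 2 * (j + 1) = 2 * j + 2 by ring, show 2 * j + 2 - 1 = 2 * j + 1 by omega,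
    div_factorial_eq_scaledEvenMoment hκ j, h4]
  have hconvex := le_of_second_diff_nonneg _ (scaledEvenMoment_second_diff_nonneg hsum) j
  rw [h0] at hconvex
  push_cast
  linarith
end

section
/- Let (λ_z)_{z∈ℤ} be a square-summable real sequence with Σ_z λ_z² = 1, and define Δ_{n,m} = (1/2) Σ_z (2^{n/2} λ_z^n − 2^{m/2} λ_z^m)² for positive integers n, m. If Δ_{n,m} = 0 for some n ≠ m with n + m even, then exactly two coefficients are nonzero and each satisfies λ_z² = 1/2, and Δ_{n',m'} = 0 for all n' ≠ m' with n' + m' even. -/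
/-!
Since `2^(c/2) x^c = (√2 x)^c`, the vanishing of the summable series `Δ_{n,m}` forces
`y^n = y^m` for each `y = √2 λ_z`, hence `y = 0` or `y² = 1`, i.e. `λ_z = 0` or `λ_z² = 1/2`;
the normalisation `Σ λ_z² = 1` then leaves exactly two nonzero coefficients. Conversely, if every
`y` is `0` or `±1`, then `y^n' = y^m'` whenever `n' + m'` is even, so every such `Δ_{n',m'}`
vanishes.
-/

open Real

lemma two_rpow_half_mul_pow (n : ℕ) (x : ℝ) : (2:ℝ) ^ ((n:ℝ)/2) * x ^ n = (√2 * x) ^ n := by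
  rw [mul_pow, sqrt_eq_rpow, ← rpow_mul_natCast zero_le_two]
  ring_nf

lemma sqrt_two_mul_sq (x : ℝ) : (√2 * x) ^ 2 = 2 * x ^ 2 := by
  rw [mul_pow, sq_sqrt zero_le_two]

lemma eq_zero_or_sq_eq_one_of_pow_eq_pow {R : Type*} [Ring R] [LinearOrder R]
    [IsStrictOrderedRing R] {y : R} {n m : ℕ} (hnm : n ≠ m) (h : y ^ n = y ^ m) :
    y = 0 ∨ y ^ 2 = 1 := by
  refine or_iff_not_imp_left.2 fun hy => ?_
  have habs : |y| ^ n = |y| ^ m := by rw [← abs_pow, ← abs_pow, h]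
  have : |y| = 1 := by
    by_contra hne
    exact hnm ((pow_right_inj₀ (abs_pos.2 hy) hne).1 habs)
  rw [← sq_abs, this, one_pow]

lemma pow_eq_pow_of_sq_eq_one {M : Type*} [Monoid M] {a : M} (ha : a ^ 2 = 1) {n m : ℕ}
    (h : Even (n + m)) : a ^ n = a ^ m := by
  have hmod : n % 2 = m % 2 := by
    have := Nat.even_iff.1 h
    omega
  rw [pow_eq_pow_mod n ha, pow_eq_pow_mod m ha, hmod]

section Summability

variable {ι : Type*}

lemma summable_sq_pow {g : ι → ℝ} {C : ℝ} (hg : Summable fun i => g i ^ 2)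
    (hC : ∀ i, g i ^ 2 ≤ C) {n : ℕ} (hn : n ≠ 0) : Summable fun i => (g i ^ n) ^ 2 := by
  obtain ⟨k, rfl⟩ := Nat.exists_eq_add_one_of_ne_zero hn
  refine .of_nonneg_of_le (fun i => sq_nonneg (g i ^ (k + 1))) (fun i => ?_) (hg.mul_left (C ^ k))
  calc (g i ^ (k + 1)) ^ 2 = (g i ^ 2) ^ k * g i ^ 2 := by ring
    _ ≤ C ^ k * g i ^ 2 := by gcongr; exact hC i

lemma summable_sub_sq {f g : ι → ℝ} (hf : Summable fun i => f i ^ 2)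
    (hg : Summable fun i => g i ^ 2) : Summable fun i => (f i - g i) ^ 2 :=
  Summable.of_nonneg_of_le (fun i => sq_nonneg _)
    (fun i => by nlinarith [sq_nonneg (f i + g i)]) ((hf.add hg).mul_left 2)

lemma eq_of_tsum_sub_sq_eq_zero {f g : ι → ℝ} (hs : Summable fun i => (f i - g i) ^ 2)
    (h : ∑' i, (f i - g i) ^ 2 = 0) (i : ι) : f i = g i := by
  have hzero := (hasSum_zero_iff_of_nonneg (fun i => sq_nonneg (f i - g i))).1 (h ▸ hs.hasSum)
  exact sub_eq_zero.1 (pow_eq_zero_iff two_ne_zero |>.1 (congrFun hzero i))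

lemma support_finite_of_summable_of_forall_eq_zero_or_eq {f : ι → ℝ} {c : ℝ} (hc : c ≠ 0)
    (hf : Summable f) (h : ∀ i, f i = 0 ∨ f i = c) : (Function.support f).Finite := by
  have hsmall := hf.tendsto_cofinite_zero.eventually (Metric.ball_mem_nhds 0 (abs_pos.2 hc))
  refine (Filter.eventually_cofinite.1 hsmall).subset fun i hi => ?_
  rcases h i with h0 | hci
  · exact absurd h0 hi
  · simp [hci]

lemma tsum_eq_ncard_support_mul {f : ι → ℝ} {c : ℝ} (hc : c ≠ 0)
    (hf : Summable f) (h : ∀ i, f i = 0 ∨ f i = c) :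
    ∑' i, f i = (Function.support f).ncard * c := by
  have hfin := support_finite_of_summable_of_forall_eq_zero_or_eq hc hf h
  rw [tsum_eq_sum (s := hfin.toFinset) (by simp),
    Finset.sum_congr rfl fun i hi => (h i).resolve_left (by simpa using hi), Finset.sum_const,
    nsmul_eq_mul, Set.ncard_eq_toFinset_card _ hfin]

lemma exists_pair_of_tsum_sq_eq_one {l : ι → ℝ} (hsum : Summable fun i => l i ^ 2)
    (h1 : ∑' i, l i ^ 2 = 1) (h : ∀ i, l i = 0 ∨ l i ^ 2 = 1 / 2) :
    ∃ k j, k ≠ j ∧ l k ^ 2 = 1 / 2 ∧ l j ^ 2 = 1 / 2 ∧ ∀ i, i ≠ k → i ≠ j → l i = 0 := by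
  have hsq : ∀ i, l i ^ 2 = 0 ∨ l i ^ 2 = 1 / 2 := fun i =>
    (h i).imp_left fun hi => by rw [hi, zero_pow two_ne_zero]
  have hcard : (Function.support fun i => l i ^ 2).ncard = 2 := by
    have := tsum_eq_ncard_support_mul (by norm_num) hsum hsq
    rw [h1] at this
    exact_mod_cast (by linarith : ((Function.support fun i => l i ^ 2).ncard : ℝ) = 2)
  obtain ⟨k, j, hkj, hsupp⟩ := Set.ncard_eq_two.1 hcard
  have hmem : ∀ i, l i ^ 2 ≠ 0 ↔ i = k ∨ i = j := fun i => by
    simpa using Set.ext_iff.1 hsupp i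
  refine ⟨k, j, hkj, (hsq k).resolve_left ((hmem k).2 (.inl rfl)),
    (hsq j).resolve_left ((hmem j).2 (.inr rfl)), fun i hik hij => ?_⟩
  by_contra hi
  rcases (hmem i).1 (pow_ne_zero 2 hi) with rfl | rfl <;> contradiction

end Summability

theorem stmt_2_general (l : ℤ → ℝ) (hsum : Summable fun z => (l z)^2)
    (h1 : ∑' z, (l z)^2 = 1)
    (Δ : ℕ → ℕ → ℝ)
    (hΔ : ∀ n m : ℕ, Δ n m =
      (1/2) * ∑' z, ((2:ℝ)^((n:ℝ)/2) * (l z)^n - (2:ℝ)^((m:ℝ)/2) * (l z)^m)^2)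
    (n m : ℕ) (hn : 1 ≤ n) (hm : 1 ≤ m) (hnm : n ≠ m)
    (h0 : Δ n m = 0) :
    (∃ k j : ℤ, k ≠ j ∧ (l k)^2 = 1/2 ∧ (l j)^2 = 1/2 ∧
      ∀ z, z ≠ k → z ≠ j → l z = 0) ∧
    ∀ n' m' : ℕ, 1 ≤ n' → 1 ≤ m' → n' ≠ m' → Even (n' + m') → Δ n' m' = 0 := by
  simp only [two_rpow_half_mul_pow] at hΔ
  have hsum' : Summable fun z => (√2 * l z) ^ 2 := by
    simpa only [sqrt_two_mul_sq] using hsum.mul_left 2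
  have hle : ∀ z, (√2 * l z) ^ 2 ≤ 2 := fun z => by
    have := h1 ▸ hsum.le_tsum z fun _ _ => sq_nonneg _
    rw [sqrt_two_mul_sq]
    linarith
  have heq : ∀ z, (√2 * l z) ^ n = (√2 * l z) ^ m := by
    refine eq_of_tsum_sub_sq_eq_zero (summable_sub_sq (summable_sq_pow hsum' hle (by omega))
      (summable_sq_pow hsum' hle (by omega))) ?_
    rw [hΔ] at h0
    linarith
  have hdich : ∀ z, l z = 0 ∨ (√2 * l z) ^ 2 = 1 := fun z =>
    (eq_zero_or_sq_eq_one_of_pow_eq_pow hnm (heq z)).imp_left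
      fun h => (mul_eq_zero.1 h).resolve_left (by positivity)
  refine ⟨exists_pair_of_tsum_sq_eq_one hsum h1 fun z => (hdich z).imp_right fun h => ?_,
    fun n' m' hn' hm' _ heven' => ?_⟩
  · rw [sqrt_two_mul_sq] at h
    linarith
  · have heq' : ∀ z, (√2 * l z) ^ n' = (√2 * l z) ^ m' := fun z => by
      rcases hdich z with h | h
      · rw [h, mul_zero, zero_pow (by omega), zero_pow (by omega)]
      · exact pow_eq_pow_of_sq_eq_one h heven'
    simp [hΔ, heq']

/-- If Δ_{n,m} = (1/2) Σ_z (2^{n/2} λ_z^n − 2^{m/2} λ_z^m)² vanishes for some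
n ≠ m with n + m even, then exactly two coefficients are nonzero, each with
square 1/2, and all such Δ_{n',m'} vanish. -/
theorem stmt_2 (l : ℤ → ℝ) (hsum : Summable fun z => (l z)^2)
    (h1 : ∑' z, (l z)^2 = 1)
    (Δ : ℕ → ℕ → ℝ)
    (hΔ : ∀ n m : ℕ, Δ n m =
      (1/2) * ∑' z, ((2:ℝ)^((n:ℝ)/2) * (l z)^n - (2:ℝ)^((m:ℝ)/2) * (l z)^m)^2)
    (n m : ℕ) (hn : 1 ≤ n) (hm : 1 ≤ m) (hnm : n ≠ m) (heven : Even (n + m))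
    (h0 : Δ n m = 0) :
    (∃ k j : ℤ, k ≠ j ∧ (l k)^2 = 1/2 ∧ (l j)^2 = 1/2 ∧
      ∀ z, z ≠ k → z ≠ j → l z = 0) ∧
    ∀ n' m' : ℕ, 1 ≤ n' → 1 ≤ m' → n' ≠ m' → Even (n' + m') → Δ n' m' = 0 :=
  stmt_2_general l hsum h1 Δ hΔ n m hn hm hnm h0
end

section
/- Let (a_ℓ)_{ℓ≥1} and (b_ℓ)_{ℓ≥1} be nonnegative square-summable sequences with Σ a_ℓ² + Σ b_ℓ² = 1, and suppose a_1² ≥ 1/2. Then for every n ≥ 2, Σ_ℓ a_ℓ^n ≥ Σ_ℓ b_ℓ^n. -/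
/-!
Every `b ℓ` is at most `a 0`, because `b ℓ² ≤ Σ b² = 1 - Σ a² ≤ 1 - a 0² ≤ 1/2 ≤ a 0²`.
Hence `Σ b^n ≤ (Σ b²) · a 0^(n-2) ≤ a 0^2 · a 0^(n-2) = a 0^n ≤ Σ a^n`.
-/

lemma pow_le_pow_mul_pow_sub {x c : ℝ} (hx : 0 ≤ x) (hxc : x ≤ c) {m n : ℕ}
    (hmn : m ≤ n) :
    x ^ n ≤ x ^ m * c ^ (n - m) := by
  rw [← pow_mul_pow_sub x hmn]
  exact mul_le_mul_of_nonneg_left (pow_le_pow_left₀ hx hxc _) (pow_nonneg hx _)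

section BoundedSequence

variable {f : ℕ → ℝ} {c : ℝ} (hf : ∀ i, 0 ≤ f i) (hfc : ∀ i, f i ≤ c)
  {m n : ℕ} (hmn : m ≤ n)
include hf hfc hmn

lemma summable_pow_of_le (hsf : Summable fun i => f i ^ m) : Summable fun i => f i ^ n :=
  (hsf.mul_right (c ^ (n - m))).of_nonneg_of_le (fun i => pow_nonneg (hf i) n)
    fun i => pow_le_pow_mul_pow_sub (hf i) (hfc i) hmn

lemma tsum_pow_le_tsum_pow_mul (hsf : Summable fun i => f i ^ m) :
    ∑' i, f i ^ n ≤ (∑' i, f i ^ m) * c ^ (n - m) := by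
  rw [← tsum_mul_right]
  exact (summable_pow_of_le hf hfc hmn hsf).tsum_le_tsum
    (fun i => pow_le_pow_mul_pow_sub (hf i) (hfc i) hmn) (hsf.mul_right _)

end BoundedSequence

lemma le_of_tsum_sq_le {f : ℕ → ℝ} {c : ℝ} (hf : ∀ i, 0 ≤ f i) (hc : 0 ≤ c)
    (hsf : Summable fun i => f i ^ 2) (hle : ∑' i, f i ^ 2 ≤ c ^ 2) (i : ℕ) : f i ≤ c :=
  (pow_le_pow_iff_left₀ (hf i) hc two_ne_zero).mp
    ((hsf.le_tsum i fun j _ => sq_nonneg (f j)).trans hle)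

/-- If a, b ≥ 0 with Σa² + Σb² = 1 and a_1² ≥ 1/2 (a_1 = a 0), then
Σ a_ℓ^n ≥ Σ b_ℓ^n for every n ≥ 2. -/
theorem stmt_4 (a b : ℕ → ℝ) (ha : ∀ i, 0 ≤ a i) (hb : ∀ i, 0 ≤ b i)
    (hsa : Summable fun i => (a i)^2) (hsb : Summable fun i => (b i)^2)
    (h1 : (∑' i, (a i)^2) + (∑' i, (b i)^2) = 1)
    (ha1 : (a 0)^2 ≥ 1/2) :
    ∀ n : ℕ, 2 ≤ n → ∑' i, (a i)^n ≥ ∑' i, (b i)^n := by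
  intro n hn
  have ha0_le : a 0 ^ 2 ≤ ∑' i, a i ^ 2 := hsa.le_tsum 0 fun j _ => sq_nonneg (a j)
  have hb_tsum_nonneg : 0 ≤ ∑' i, b i ^ 2 := tsum_nonneg fun i => sq_nonneg (b i)
  have hb_tsum_le : ∑' i, b i ^ 2 ≤ a 0 ^ 2 := by linarith
  have ha_le_one : ∀ i, a i ≤ 1 :=
    le_of_tsum_sq_le ha zero_le_one hsa (by linarith)
  have hb_le : ∀ i, b i ≤ a 0 := le_of_tsum_sq_le hb (ha 0) hsb hb_tsum_le
  calc ∑' i, b i ^ n ≤ (∑' i, b i ^ 2) * a 0 ^ (n - 2) :=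
        tsum_pow_le_tsum_pow_mul hb hb_le hn hsb
    _ ≤ a 0 ^ 2 * a 0 ^ (n - 2) :=
        mul_le_mul_of_nonneg_right hb_tsum_le (pow_nonneg (ha 0) _)
    _ = a 0 ^ n := pow_mul_pow_sub _ hn
    _ ≤ ∑' i, a i ^ n :=
        (summable_pow_of_le ha ha_le_one hn hsa).le_tsum 0 fun j _ => pow_nonneg (ha j) n
end

section
/- Let (λ_z)_{z∈ℤ} be a square-summable real sequence with Σ_z λ_z² = 1 and Σ_z λ_z⁴ ≥ 1/2, and define κ_n = 2^{n/2−1}(n−1)! Σ_z λ_z^n. Then for all r ≥ 1, κ_{2r} ≥ (2r−1)!. Moreover, if κ_{2r} = (2r−1)! for some r ≥ 3, then κ_{2s} = (2s−1)! for all s ≥ 1. -/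
/-!
Write `q z = 2 λ_z²`, so that `κ_{2r} / (2r-1)! = ½ ∑ q_z^r`, `∑ q_z = 2` and `∑ q_z² ≥ 2`.
Bernoulli's inequality `x^n ≥ 1 + n (x - 1)`, multiplied by `x ≥ 0`, gives
`x^(n+1) ≥ (1 - n) x + n x²`; summed over `z` this is the telescoping inequality
`κ_{2r}/(2r-1)! - 1 ≥ (r-1) (κ_4/6 - 1) ≥ 0`. If equality holds for some `r ≥ 3`, then
`∑ q² = ∑ q` and the strict Bernoulli inequality forces every `q_z` into `{0, 1}`,
so all the power sums `∑ q_z^s` equal `∑ q_z = 2`.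
-/

lemma one_add_mul_sub_lt_pow {x : ℝ} (hx : 0 ≤ x) (hx1 : x ≠ 1) {n : ℕ} (hn : 2 ≤ n) :
    1 + n * (x - 1) < x ^ n := by
  have hn' : (1 : ℝ) < n := by exact_mod_cast hn
  simpa [← Real.rpow_natCast] using
    one_add_mul_self_lt_rpow_one_add (s := x - 1) (by linarith) (sub_ne_zero.2 hx1) hn'

lemma sub_mul_add_mul_sq_le_pow_succ {x : ℝ} (hx : 0 ≤ x) (n : ℕ) :
    (1 - n) * x + n * x ^ 2 ≤ x ^ (n + 1) := by
  have := mul_le_mul_of_nonneg_left (one_add_mul_sub_le_pow (by linarith : (-1 : ℝ) ≤ x) n) hx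
  linear_combination this

lemma sub_mul_add_mul_sq_lt_pow_succ {x : ℝ} (hx : 0 < x) (hx1 : x ≠ 1) {n : ℕ} (hn : 2 ≤ n) :
    (1 - n) * x + n * x ^ 2 < x ^ (n + 1) := by
  have := mul_lt_mul_of_pos_left (one_add_mul_sub_lt_pow hx.le hx1 hn) hx
  linear_combination this

section PowerSums

variable {ι : Type*} {q : ι → ℝ}

lemma summable_pow_of_nonneg (hq0 : ∀ i, 0 ≤ q i) (hq : Summable q) {n : ℕ} (hn : n ≠ 0) :
    Summable fun i => q i ^ n := by
  obtain ⟨m, rfl⟩ := Nat.exists_eq_add_one_of_ne_zero hn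
  refine Summable.of_nonneg_of_le (fun i => pow_nonneg (hq0 i) _) (fun i => ?_)
    (hq.mul_left ((∑' j, q j) ^ m))
  rw [pow_succ]
  exact mul_le_mul_of_nonneg_right
    (pow_le_pow_left₀ (hq0 i) (hq.le_tsum i fun j _ => hq0 j) m) (hq0 i)

lemma tsum_sub_mul_add_mul_sq (hq0 : ∀ i, 0 ≤ q i) (hq : Summable q) (n : ℕ) :
    ∑' i, ((1 - n) * q i + n * q i ^ 2) = (1 - n) * ∑' i, q i + n * ∑' i, q i ^ 2 := by
  rw [(hq.mul_left _).tsum_add ((summable_pow_of_nonneg hq0 hq two_ne_zero).mul_left _),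
    tsum_mul_left, tsum_mul_left]

lemma sub_mul_add_mul_tsum_sq_le_tsum_pow_succ (hq0 : ∀ i, 0 ≤ q i) (hq : Summable q) (n : ℕ) :
    (1 - n) * ∑' i, q i + n * ∑' i, q i ^ 2 ≤ ∑' i, q i ^ (n + 1) := by
  rw [← tsum_sub_mul_add_mul_sq hq0 hq]
  exact Summable.tsum_le_tsum (fun i => sub_mul_add_mul_sq_le_pow_succ (hq0 i) n)
    ((hq.mul_left _).add ((summable_pow_of_nonneg hq0 hq two_ne_zero).mul_left _))
    (summable_pow_of_nonneg hq0 hq n.succ_ne_zero)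

lemma eq_zero_or_eq_one_of_tsum_pow_succ_eq (hq0 : ∀ i, 0 ≤ q i) (hq : Summable q) {n : ℕ}
    (hn : 2 ≤ n) (heq : ∑' i, q i ^ (n + 1) = (1 - n) * ∑' i, q i + n * ∑' i, q i ^ 2) (i : ι) :
    q i = 0 ∨ q i = 1 := by
  by_contra! hi
  have hlt := Summable.tsum_lt_tsum (i := i)
    (fun j => sub_mul_add_mul_sq_le_pow_succ (hq0 j) n)
    (sub_mul_add_mul_sq_lt_pow_succ ((hq0 i).lt_of_ne' hi.1) hi.2 hn)
    ((hq.mul_left _).add ((summable_pow_of_nonneg hq0 hq two_ne_zero).mul_left _))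
    (summable_pow_of_nonneg hq0 hq n.succ_ne_zero)
  rw [tsum_sub_mul_add_mul_sq hq0 hq, heq] at hlt
  exact lt_irrefl _ hlt

lemma tsum_le_tsum_pow (hq0 : ∀ i, 0 ≤ q i) (hq : Summable q)
    (h2 : ∑' i, q i ≤ ∑' i, q i ^ 2) {r : ℕ} (hr : r ≠ 0) :
    ∑' i, q i ≤ ∑' i, q i ^ r := by
  obtain ⟨n, rfl⟩ := Nat.exists_eq_add_one_of_ne_zero hr
  have := sub_mul_add_mul_tsum_sq_le_tsum_pow_succ hq0 hq n
  nlinarith [n.cast_nonneg (α := ℝ)]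

lemma tsum_pow_eq_tsum_of_tsum_pow_eq (hq0 : ∀ i, 0 ≤ q i) (hq : Summable q)
    (h2 : ∑' i, q i ≤ ∑' i, q i ^ 2) {r : ℕ} (hr : 3 ≤ r) (heq : ∑' i, q i ^ r = ∑' i, q i)
    (s : ℕ) (hs : s ≠ 0) :
    ∑' i, q i ^ s = ∑' i, q i := by
  obtain ⟨n, rfl⟩ : ∃ n, r = n + 1 := ⟨r - 1, by omega⟩
  have hn : 2 ≤ n := by omega
  have hn' : (2 : ℝ) ≤ n := by exact_mod_cast hn
  have hle := sub_mul_add_mul_tsum_sq_le_tsum_pow_succ hq0 hq n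
  have hsq : ∑' i, q i ^ 2 = ∑' i, q i := by nlinarith
  have h01 := eq_zero_or_eq_one_of_tsum_pow_succ_eq hq0 hq hn (by rw [heq, hsq]; ring)
  refine tsum_congr fun i => ?_
  rcases h01 i with h | h <;> simp [h, hs]

end PowerSums

/-- If Σ λ_z² = 1 and Σ λ_z⁴ ≥ 1/2, the cumulants
κ_n = 2^{n/2−1}(n−1)! Σ λ_z^n satisfy κ_{2r} ≥ (2r−1)! for all r ≥ 1, and if
equality holds for some r ≥ 3 then it holds for all s ≥ 1. -/
theorem stmt_10 (l : ℤ → ℝ) (hsum : Summable fun z => (l z)^2)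
    (h1 : ∑' z, (l z)^2 = 1) (h4 : ∑' z, (l z)^4 ≥ 1/2)
    (κ : ℕ → ℝ)
    (hκ : ∀ n, 2 ≤ n →
      κ n = (2:ℝ)^((n:ℝ)/2 - 1) * ((n-1).factorial : ℝ) * ∑' z, (l z)^n) :
    (∀ r : ℕ, 1 ≤ r → κ (2*r) ≥ ((2*r-1).factorial : ℝ)) ∧
    (∀ r : ℕ, 3 ≤ r → κ (2*r) = ((2*r-1).factorial : ℝ) →
      ∀ s : ℕ, 1 ≤ s → κ (2*s) = ((2*s-1).factorial : ℝ)) := by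
  set q : ℤ → ℝ := fun z => 2 * l z ^ 2
  have hq0 : ∀ z, 0 ≤ q z := fun z => by positivity
  have hq : Summable q := hsum.mul_left 2
  have hq1 : ∑' z, q z = 2 := by rw [tsum_mul_left, h1, mul_one]
  have hq2 : ∑' z, q z ≤ ∑' z, q z ^ 2 := by
    have : ∑' z, q z ^ 2 = 4 * ∑' z, l z ^ 4 := by
      rw [← tsum_mul_left]; exact tsum_congr fun z => by ring
    linarith
  have hκq : ∀ r, 1 ≤ r → κ (2 * r) = ((2 * r - 1).factorial : ℝ) * ((∑' z, q z ^ r) / 2) := by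
    intro r hr
    obtain ⟨t, rfl⟩ : ∃ t, r = t + 1 := ⟨r - 1, by omega⟩
    have hexp : ((2 * (t + 1) : ℕ) : ℝ) / 2 - 1 = (t : ℕ) := by push_cast; ring
    have hpow : ∑' z, q z ^ (t + 1) = 2 ^ (t + 1) * ∑' z, l z ^ (2 * (t + 1)) := by
      rw [← tsum_mul_left]; exact tsum_congr fun z => by rw [mul_pow, pow_mul]
    rw [hκ _ (by omega), hexp, Real.rpow_natCast, hpow]
    ring
  refine ⟨fun r hr => ?_, fun r hr heq s hs => ?_⟩
  · have := tsum_le_tsum_pow hq0 hq hq2 (r := r) (by omega)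
    rw [hκq r hr, ge_iff_le]
    nlinarith [Nat.factorial_pos (2 * r - 1)]
  · have hfac : ((2 * r - 1).factorial : ℝ) ≠ 0 := by positivity
    rw [hκq r (by omega)] at heq
    have hr2 : ∑' z, q z ^ r = ∑' z, q z := by
      rw [hq1]; linarith [(mul_eq_left₀ hfac).1 heq]
    rw [hκq s hs, tsum_pow_eq_tsum_of_tsum_pow_eq hq0 hq hq2 hr hr2 s (by omega), hq1]
    ring
end

section
/- Let (λ_z)_{z∈ℤ} be square-summable with Σ λ_z² = 1, and define free cumulants ĸ_n = Σ_z λ_z^n. Then ĸ_6 − ĸ_4 + (1/4)ĸ_2 = Σ_z λ_z²(λ_z² − 1/2)² ≥ 0. Consequently, for F in the second Wigner chaos with φ(F²) = 1, one has φ(F⁶) − 7φ(F⁴) + (37/4)φ(F²) = ĸ_6 − ĸ_4 + (1/4)ĸ_2 + 3ĸ_3² ≥ 0. -/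
/-!
Termwise, `λ⁶ − λ⁴ + λ²/4 = λ²(λ² − 1/2)²`, and all powers `λ_z^n` with `n ≥ 2` are summable
because `λ_z → 0`; summing gives the cumulant identity. Under `ĸ_2 = 1` the moment formulas turn
`φ(F⁶) − 7φ(F⁴) + (37/4)φ(F²)` into that nonnegative sum plus `3ĸ_3²`.
-/

theorem summable_pow_of_summable_sq {ι : Type*} {f : ι → ℝ} (hf : Summable fun i => f i ^ 2)
    {n : ℕ} (hn : 2 ≤ n) : Summable fun i => f i ^ n := by
  have h_small : ∀ᶠ i in Filter.cofinite, f i ^ 2 ≤ 1 :=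
    hf.tendsto_cofinite_zero.eventually (ge_mem_nhds one_pos)
  refine hf.of_norm_bounded_eventually (h_small.mono fun i hi => ?_)
  rw [norm_pow, Real.norm_eq_abs, ← sq_abs (f i)]
  exact pow_le_pow_of_le_one (abs_nonneg _) ((sq_le_one_iff_abs_le_one _).mp hi) hn

theorem tsum_pow_six_sub_pow_four_add_quarter_sq {ι : Type*} {f : ι → ℝ}
    (hf : Summable fun i => f i ^ 2) :
    ∑' i, f i ^ 6 - ∑' i, f i ^ 4 + 1 / 4 * ∑' i, f i ^ 2
      = ∑' i, f i ^ 2 * (f i ^ 2 - 1 / 2) ^ 2 := by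
  have h4 := summable_pow_of_summable_sq hf (n := 4) (by norm_num)
  have h6 := summable_pow_of_summable_sq hf (n := 6) (by norm_num)
  calc ∑' i, f i ^ 6 - ∑' i, f i ^ 4 + 1 / 4 * ∑' i, f i ^ 2
      = ∑' i, (f i ^ 6 - f i ^ 4 + 1 / 4 * f i ^ 2) := by
        rw [(h6.sub h4).tsum_add (hf.mul_left _), h6.tsum_sub h4, tsum_mul_left]
    _ = ∑' i, f i ^ 2 * (f i ^ 2 - 1 / 2) ^ 2 := by congr 1; funext i; ring

/-- On the second Wigner chaos with unit variance, the free cumulants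
ĸ_n = Σ λ_z^n satisfy ĸ_6 − ĸ_4 + (1/4)ĸ_2 = Σ λ_z²(λ_z² − 1/2)² ≥ 0;
consequently φ(F⁶) − 7φ(F⁴) + (37/4)φ(F²) = ĸ_6 − ĸ_4 + (1/4)ĸ_2 + 3ĸ_3² ≥ 0,
where the moments are φ(F²) = ĸ_2, φ(F⁴) = ĸ_4 + 2ĸ_2²,
φ(F⁶) = ĸ_6 + 6ĸ_4ĸ_2 + 3ĸ_3² + 5ĸ_2³. -/
theorem stmt_15 (l : ℤ → ℝ) (hsum : Summable fun z => (l z)^2)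
    (h1 : ∑' z, (l z)^2 = 1)
    (κ : ℕ → ℝ) (hκ : ∀ n, 2 ≤ n → κ n = ∑' z, (l z)^n) :
    (κ 6 - κ 4 + (1/4) * κ 2 = ∑' z, (l z)^2 * ((l z)^2 - 1/2)^2 ∧
      0 ≤ κ 6 - κ 4 + (1/4) * κ 2) ∧
    ∀ φ2 φ4 φ6 : ℝ, φ2 = κ 2 → φ4 = κ 4 + 2 * (κ 2)^2 →
      φ6 = κ 6 + 6 * κ 4 * κ 2 + 3 * (κ 3)^2 + 5 * (κ 2)^3 →
      φ6 - 7 * φ4 + (37/4) * φ2 = κ 6 - κ 4 + (1/4) * κ 2 + 3 * (κ 3)^2 ∧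
      0 ≤ φ6 - 7 * φ4 + (37/4) * φ2 := by
  have cumulant_identity : κ 6 - κ 4 + 1 / 4 * κ 2 = ∑' z, l z ^ 2 * (l z ^ 2 - 1 / 2) ^ 2 := by
    rw [hκ 6 (by norm_num), hκ 4 (by norm_num), hκ 2 le_rfl]
    exact tsum_pow_six_sub_pow_four_add_quarter_sq hsum
  have cumulant_nonneg : 0 ≤ κ 6 - κ 4 + 1 / 4 * κ 2 :=
    cumulant_identity ▸ tsum_nonneg fun z => by positivity
  refine ⟨⟨cumulant_identity, cumulant_nonneg⟩, fun φ2 φ4 φ6 h2 h4 h6 => ?_⟩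
  have hκ2 : κ 2 = 1 := (hκ 2 le_rfl).trans h1
  have moment_identity :
      φ6 - 7 * φ4 + 37 / 4 * φ2 = κ 6 - κ 4 + 1 / 4 * κ 2 + 3 * κ 3 ^ 2 := by
    rw [h2, h4, h6, hκ2]; ring
  exact ⟨moment_identity, moment_identity ▸ add_nonneg cumulant_nonneg (by positivity)⟩
end

section
/- Let (λ_z)_{z∈ℤ} be square-summable with Σ_z λ_z² = 1 and Σ_z λ_z⁴ ≥ 1/2, and define free cumulants ĸ_n = Σ_z λ_z^n. Then for all n ≥ 1, ĸ_{2n} ≥ 2^{1−n}, i.e., 2^{n−1}ĸ_{2n} − ĸ_2 ≥ (n−1)(2ĸ_4 − ĸ_2) ≥ 0. If moreover ĸ_{2n} = 2^{1−n} for some n ≥ 3, then ĸ_{2s} = 2^{1−s} for all s ≥ 1. -/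
/-!
Put `t z = λ_z ^ 2`, so `t ≥ 0` and `∑ t = 1`, and let
`a j = dyadicMoment t j = 2 ^ j ∑ t ^ (j + 1)`, which is `2 ^ j κ_{2j+2}`.
With `u = 2 t`, the pointwise inequality `(u - 1) (u ^ (j + 1) - u) ≥ 0` sums to
`a (j + 1) - a j ≥ a 1 - a 0 = 2 κ_4 - 1 ≥ 0`, and telescoping gives
`a j ≥ 1 + j (2 κ_4 - 1) ≥ 1`. If `a m = 1` for some `m ≥ 2`, all these inequalities are
equalities; in particular `∑ t (2 t - 1) ^ 2 = 4 κ_6 - 4 κ_4 + κ_2 = 0`, so every `t z` is `0`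
or `1 / 2`, which forces `a j = 1` for all `j`.
-/

lemma add_mul_le_of_le_sub_succ {α : Type*} [Ring α] [PartialOrder α] [IsOrderedRing α]
    {a : ℕ → α} {d : α} (h : ∀ j, d ≤ a (j + 1) - a j) (k m : ℕ) :
    a k + m * d ≤ a (k + m) := by
  induction m with
  | zero => simp
  | succ m ih =>
    rw [← add_assoc, Nat.cast_succ, add_one_mul, ← add_assoc]
    exact (add_le_add_left ih d).trans (le_sub_iff_add_le'.1 (h _))

lemma sub_one_mul_pow_succ_sub_self_nonneg {u : ℝ} (hu : 0 ≤ u) (k : ℕ) :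
    0 ≤ (u - 1) * (u ^ (k + 1) - u) := by
  rcases le_total u 1 with h | h
  · exact mul_nonneg_of_nonpos_of_nonpos (by linarith)
      (by simpa using pow_le_of_le_one hu h k.succ_ne_zero)
  · exact mul_nonneg (by linarith) (by simpa using le_self_pow₀ h k.succ_ne_zero)

noncomputable def dyadicMoment {ι : Type*} (t : ι → ℝ) (j : ℕ) : ℝ :=
  2 ^ j * ∑' z, t z ^ (j + 1)

section

variable {ι : Type*} {t : ι → ℝ}

lemma summable_pow_succ_of_tsum_eq_one (ht0 : ∀ z, 0 ≤ t z) (hts : Summable t)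
    (ht1 : ∑' z, t z = 1) (k : ℕ) : Summable fun z => t z ^ (k + 1) := by
  refine hts.of_nonneg_of_le (fun z => pow_nonneg (ht0 z) _) fun z => ?_
  refine pow_le_of_le_one (ht0 z) ?_ k.succ_ne_zero
  exact ht1 ▸ hts.le_tsum z fun j _ => ht0 j

lemma dyadicMoment_zero (ht1 : ∑' z, t z = 1) : dyadicMoment t 0 = 1 := by
  simp [dyadicMoment, ht1]

lemma hasSum_dyadicMoment_sub_sub (hts : ∀ k : ℕ, Summable fun z => t z ^ (k + 1)) (j : ℕ) :
    HasSum (fun z => (2 * t z - 1) * ((2 * t z) ^ (j + 1) - 2 * t z) / 2)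
      (dyadicMoment t (j + 1) - dyadicMoment t j - (dyadicMoment t 1 - dyadicMoment t 0)) := by
  have h := ((((hts (j + 1)).hasSum.mul_left (2 ^ (j + 1))).sub
    ((hts j).hasSum.mul_left (2 ^ j))).sub (((hts 1).hasSum.mul_left 2).sub (hts 0).hasSum))
  have hf : (fun z => (2 * t z - 1) * ((2 * t z) ^ (j + 1) - 2 * t z) / 2) = fun z =>
      2 ^ (j + 1) * t z ^ (j + 1 + 1) - 2 ^ j * t z ^ (j + 1) -
        (2 * t z ^ (1 + 1) - t z ^ (0 + 1)) :=
    funext fun z => by ring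
  have hv : dyadicMoment t (j + 1) - dyadicMoment t j - (dyadicMoment t 1 - dyadicMoment t 0) =
      2 ^ (j + 1) * ∑' z, t z ^ (j + 1 + 1) - 2 ^ j * ∑' z, t z ^ (j + 1) -
        (2 * ∑' z, t z ^ (1 + 1) - ∑' z, t z ^ (0 + 1)) := by
    simp only [dyadicMoment]
    ring
  rw [hf, hv]
  exact h

lemma dyadicMoment_one_sub_zero_le (ht0 : ∀ z, 0 ≤ t z)
    (hts : ∀ k : ℕ, Summable fun z => t z ^ (k + 1)) (j : ℕ) :
    dyadicMoment t 1 - dyadicMoment t 0 ≤ dyadicMoment t (j + 1) - dyadicMoment t j :=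
  sub_nonneg.1 <| (hasSum_dyadicMoment_sub_sub hts j).nonneg fun z =>
    div_nonneg (sub_one_mul_pow_succ_sub_self_nonneg (by linarith [ht0 z]) j) zero_le_two

lemma eq_zero_or_eq_half_of_dyadicMoment_sub_eq (ht0 : ∀ z, 0 ≤ t z)
    (hts : ∀ k : ℕ, Summable fun z => t z ^ (k + 1))
    (h : dyadicMoment t 2 - dyadicMoment t 1 = dyadicMoment t 1 - dyadicMoment t 0) (z : ι) :
    t z = 0 ∨ t z = 1 / 2 := by
  have hsum := hasSum_dyadicMoment_sub_sub hts 1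
  rw [h, sub_self] at hsum
  have hnonneg (y : ι) : 0 ≤ (2 * t y - 1) * ((2 * t y) ^ (1 + 1) - 2 * t y) / 2 :=
    div_nonneg (sub_one_mul_pow_succ_sub_self_nonneg (by linarith [ht0 y]) 1) zero_le_two
  have hz := congrFun ((hasSum_zero_iff_of_nonneg hnonneg).1 hsum) z
  rw [Pi.zero_apply] at hz
  have hz' : t z * (2 * t z - 1) ^ 2 = 0 := by linear_combination hz
  rcases mul_eq_zero.1 hz' with h | h
  · exact Or.inl h
  · exact Or.inr (by linarith [pow_eq_zero_iff two_ne_zero |>.1 h])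

lemma dyadicMoment_eq_one_of_eq_zero_or_eq_half (ht1 : ∑' z, t z = 1)
    (h : ∀ z, t z = 0 ∨ t z = 1 / 2) (j : ℕ) : dyadicMoment t j = 1 := by
  rw [dyadicMoment, ← tsum_mul_left, ← ht1]
  refine tsum_congr fun z => ?_
  rcases h z with h | h <;> rw [h]
  · simp
  · rw [pow_succ, ← mul_assoc, ← mul_pow]; norm_num

lemma dyadicMoment_eq_one_of_eq_one_of_two_le (ht0 : ∀ z, 0 ≤ t z)
    (hts : ∀ k : ℕ, Summable fun z => t z ^ (k + 1)) (ht1 : ∑' z, t z = 1)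
    (h1 : 1 ≤ dyadicMoment t 1) {m : ℕ} (hm : 2 ≤ m) (hm1 : dyadicMoment t m = 1) (j : ℕ) :
    dyadicMoment t j = 1 := by
  have hstep := dyadicMoment_one_sub_zero_le ht0 hts
  have hgrowth := add_mul_le_of_le_sub_succ hstep
  have h0 := dyadicMoment_zero ht1
  have ha1 : dyadicMoment t 1 = 1 := by
    have h0m := hgrowth 0 m
    rw [zero_add, hm1, h0] at h0m
    have : (2 : ℝ) ≤ m := by exact_mod_cast hm
    nlinarith
  have h12 := hstep 1
  have h2m := hgrowth 2 (m - 2)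
  rw [ha1, h0, sub_self, mul_zero, add_zero, Nat.add_sub_cancel' hm, hm1] at h2m
  rw [ha1, h0] at h12
  refine dyadicMoment_eq_one_of_eq_zero_or_eq_half ht1
    (eq_zero_or_eq_half_of_dyadicMoment_sub_eq ht0 hts ?_) j
  rw [ha1, h0]
  linarith

end

/-- If Σ λ_z² = 1 and Σ λ_z⁴ ≥ 1/2, the free cumulants ĸ_n = Σ λ_z^n satisfy
ĸ_{2n} ≥ 2^{1−n}, i.e. 2^{n−1}ĸ_{2n} − ĸ_2 ≥ (n−1)(2ĸ_4 − ĸ_2) ≥ 0, and if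
ĸ_{2n} = 2^{1−n} for some n ≥ 3 then ĸ_{2s} = 2^{1−s} for all s ≥ 1. -/
theorem stmt_16 (l : ℤ → ℝ) (hsum : Summable fun z => (l z)^2)
    (h1 : ∑' z, (l z)^2 = 1) (h4 : ∑' z, (l z)^4 ≥ 1/2)
    (κ : ℕ → ℝ) (hκ : ∀ n, 2 ≤ n → κ n = ∑' z, (l z)^n) :
    (∀ n : ℕ, 1 ≤ n →
      κ (2*n) ≥ (2:ℝ)^(1 - (n:ℤ)) ∧
      (2:ℝ)^((n:ℤ) - 1) * κ (2*n) - κ 2 ≥ ((n:ℝ) - 1) * (2 * κ 4 - κ 2) ∧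
      ((n:ℝ) - 1) * (2 * κ 4 - κ 2) ≥ 0) ∧
    (∀ n : ℕ, 3 ≤ n → κ (2*n) = (2:ℝ)^(1 - (n:ℤ)) →
      ∀ s : ℕ, 1 ≤ s → κ (2*s) = (2:ℝ)^(1 - (s:ℤ))) := by
  set t : ℤ → ℝ := fun z => l z ^ 2
  have ht0 : ∀ z, 0 ≤ t z := fun z => sq_nonneg _
  have hts := summable_pow_succ_of_tsum_eq_one ht0 hsum h1
  have hκt (j : ℕ) : κ (2 * (j + 1)) = (2 ^ j)⁻¹ * dyadicMoment t j := by
    rw [dyadicMoment, inv_mul_cancel_left₀ (by positivity), hκ _ (by omega)]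
    simp only [t, ← pow_mul]
  have hzpow (j : ℕ) : (2 : ℝ) ^ (1 - ((j + 1 : ℕ) : ℤ)) = (2 ^ j)⁻¹ := by
    rw [show (1 : ℤ) - ((j + 1 : ℕ) : ℤ) = -j by push_cast; ring, zpow_neg, zpow_natCast]
  have h0 : dyadicMoment t 0 = 1 := dyadicMoment_zero h1
  have hκ2 : κ 2 = 1 := by simpa [h0] using hκt 0
  have hκ4 : 2 * κ 4 = dyadicMoment t 1 := by rw [hκt 1]; ring
  have ha1 : 1 ≤ dyadicMoment t 1 := by
    rw [← hκ4, hκ 4 (by norm_num)]; linarith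
  have hgrowth (j : ℕ) : 1 + j * (dyadicMoment t 1 - 1) ≤ dyadicMoment t j := by
    simpa [h0] using add_mul_le_of_le_sub_succ (dyadicMoment_one_sub_zero_le ht0 hts) 0 j
  refine ⟨fun n hn => ?_, fun n hn heq s hs => ?_⟩
  · obtain ⟨j, rfl⟩ := Nat.exists_eq_add_of_le' hn
    have hj : 0 ≤ (j : ℝ) * (dyadicMoment t 1 - 1) := mul_nonneg j.cast_nonneg (by linarith)
    rw [hzpow, Nat.cast_succ, add_sub_cancel_right, zpow_natCast, hκt,
      mul_inv_cancel_left₀ (by positivity), hκ2, hκ4]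
    push_cast
    refine ⟨le_mul_of_one_le_right (by positivity) ?_, ?_, ?_⟩ <;> linarith [hgrowth j]
  · obtain ⟨j, rfl⟩ := Nat.exists_eq_add_of_le' hs
    obtain ⟨m, rfl⟩ := Nat.exists_eq_add_of_le' (by omega : 1 ≤ n)
    rw [hκt, hzpow, mul_eq_left₀ (by positivity)] at heq
    rw [hκt, hzpow, mul_eq_left₀ (by positivity)]
    exact dyadicMoment_eq_one_of_eq_one_of_two_le ht0 hts h1 ha1 (by omega : 2 ≤ m) heq j
end

section
/- For every n ≥ 3, the 2n-th moment of the centered normalized chi-square with two degrees of freedom, μ_{2n} = Σ_{s=0}^{2n} (−1)^s (2n)!/(2n−s)!, is strictly greater than the 2n-th moment of the normal product law, ((2n)!/(n!·2^n))² = ((2n−1)!!)². -/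
/-!
The alternating sum is `(-1)^(2n) D(2n) = D(2n)`, the number of derangements of `2n` points, and
`(2n)! / (n! 2^n) = (2n-1)‼`. The derangement recurrence gives
`D(2n+2) = (2n+2)(2n+1) D(2n) - (2n+1)` while `(2n+1)‼² = (2n+1)² (2n-1)‼²`, so the strict
inequality `(2n-1)‼² < D(2n)`, checked at `n = 3` (`225 < 265`), propagates by induction.
-/

open Finset Nat

theorem Nat.factorial_two_mul_eq_mul_doubleFactorial (n : ℕ) :
    (2 * n)! = 2 ^ n * n ! * (2 * n - 1)‼ := by
  rcases n with _ | n
  · rfl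
  · rw [show 2 * (n + 1) - 1 = 2 * n + 1 by omega, show 2 * (n + 1) = 2 * n + 1 + 1 by ring,
      factorial_eq_mul_doubleFactorial, show 2 * n + 1 + 1 = 2 * (n + 1) by ring,
      doubleFactorial_two_mul]

theorem sum_neg_one_pow_mul_factorial_div_factorial_sub (m : ℕ) :
    ∑ s ∈ range (m + 1), (-1 : ℝ) ^ s * m ! / (m - s)! = (-1) ^ m * numDerangements m := by
  rw [← Int.cast_natCast (numDerangements m), numDerangements_sum, Int.cast_sum, mul_sum,
    ← sum_range_reflect]
  refine sum_congr rfl fun s hs => ?_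
  have hs : s ≤ m := mem_range_succ_iff.mp hs
  have hfac : (s ! : ℝ) * (s + 1).ascFactorial (m - s) = m ! := by
    exact_mod_cast by rw [factorial_mul_ascFactorial, Nat.add_sub_cancel' hs]
  have hsign : (-1 : ℝ) ^ m * (-1) ^ s = (-1) ^ (m - s) := by
    rw [← Nat.sub_add_cancel hs, pow_add, mul_assoc, ← pow_add, ← two_mul, pow_mul]
    norm_num
  rw [add_tsub_cancel_right, Nat.sub_sub_self hs, ← hfac]
  push_cast
  rw [← mul_assoc ((-1) ^ m), hsign]
  field_simp

theorem numDerangements_two_mul_add_two (n : ℕ) :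
    (numDerangements (2 * n + 2) : ℤ) =
      (2 * n + 2) * (2 * n + 1) * numDerangements (2 * n) - (2 * n + 1) := by
  rw [numDerangements_succ, numDerangements_succ, pow_succ, pow_mul]
  push_cast
  ring

theorem doubleFactorial_two_mul_sub_one_sq_lt_numDerangements {n : ℕ} (hn : 3 ≤ n) :
    (2 * n - 1)‼ ^ 2 < numDerangements (2 * n) := by
  induction n, hn using Nat.le_induction with
  | base => decide
  | succ n hn ih =>
    zify at ih ⊢
    rw [show 2 * (n + 1) - 1 = 2 * n + 1 by omega, doubleFactorial_add_one,
      show 2 * (n + 1) = 2 * n + 2 by ring, numDerangements_two_mul_add_two]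
    push_cast
    have hcoef : (0 : ℤ) ≤ (2 * n + 2) * (2 * n + 1) := by positivity
    nlinarith [mul_le_mul_of_nonneg_left (Int.add_one_le_of_lt ih) hcoef]

/-- For n ≥ 3 the 2n-th moment of the centered normalized chi-square with two
degrees of freedom, Σ_{s=0}^{2n} (−1)^s (2n)!/(2n−s)!, strictly exceeds the
2n-th moment ((2n)!/(n!2^n))² = ((2n−1)!!)² of the normal product law. -/
theorem stmt_19 : ∀ n : ℕ, 3 ≤ n →
    (∑ s ∈ Finset.range (2*n+1),
        (-1:ℝ)^s * ((2*n).factorial : ℝ) / (((2*n - s).factorial : ℕ) : ℝ))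
      > (((2*n).factorial : ℝ) / ((n.factorial : ℝ) * 2^n))^2 ∧
    (((2*n).factorial : ℝ) / ((n.factorial : ℝ) * 2^n))^2
      = ((Nat.doubleFactorial (2*n-1) : ℕ) : ℝ)^2 := by
  intro n hn
  have hdf : ((2 * n)! : ℝ) / (n ! * 2 ^ n) = (2 * n - 1)‼ := by
    rw [factorial_two_mul_eq_mul_doubleFactorial]
    push_cast
    field_simp
  have hsum : ∑ s ∈ range (2 * n + 1), (-1 : ℝ) ^ s * (2 * n)! / (2 * n - s)! =
      numDerangements (2 * n) := by
    rw [sum_neg_one_pow_mul_factorial_div_factorial_sub, pow_mul]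
    norm_num
  refine ⟨?_, by rw [hdf]⟩
  rw [hsum, hdf, gt_iff_lt]
  exact_mod_cast doubleFactorial_two_mul_sub_one_sq_lt_numDerangements hn
end
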